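/- Let η be a positive finite measure on Θ with strict priorities. If the interest function I is (η, V^det)-stable, then the cutoff vector 𝓟(I), defined by 𝓟_h(I) = inf{p ≥ 0 : I_h(p) < C_h}, is η-market-clearing, and I = I^{𝓟(I)}. -/

import Mathlib

open MeasureTheory Filter
open scoped Classical ENNReal

noncomputable section

/-- A student type: a complete (linear) order on `Option H` (`none` is the outside option `∅`),
together with a priority score in `[0,1]` at each school. -/
abbrev Student (H : Type*) := LinearOrder (Option H) × (H → unitInterval)

instance (H : Type*) : MeasurableSpace (LinearOrder (Option H)) := ⊤
instance (H : Type*) : TopologicalSpace (LinearOrder (Option H)) := ⊥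

/-- `Prefers θ a b` : student `θ` strictly prefers option `a` to option `b`. -/
def Prefers {H : Type*} (θ : Student H) (a b : Option H) : Prop := θ.1.lt b a

/-- Priority of `θ` at option `h` (junk value `1` at the outside option). -/
def priOf {H : Type*} (θ : Student H) : Option H → unitInterval := fun o => o.elim 1 θ.2

abbrev MatchingFun (H : Type*) := Student H → Option H → ℝ
abbrev InterestFun (H : Type*) := H → unitInterval → ℝ
abbrev AdmissionsFun (H : Type*) := Option H → unitInterval → ℝ

section Defs
variable {H : Type*} [Fintype H]

/-- `M` maps each student to a probability distribution over `Option H`. -/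
def IsMatchingFun (M : MatchingFun H) : Prop :=
  ∀ θ : Student H, (∀ h, 0 ≤ M θ h) ∧ ∑ h : Option H, M θ h = 1

/-- Interest functions are componentwise weakly decreasing and nonnegative. -/
def IsInterestFun (I : InterestFun H) : Prop :=
  ∀ h, Antitone (I h) ∧ ∀ p, 0 ≤ I h p

/-- Admissions functions are componentwise weakly increasing with values in `[0,1]`,
and everyone is always admitted to the outside option. -/
def IsAdmissionsFun (A : AdmissionsFun H) : Prop :=
  (∀ h, Monotone (A h) ∧ ∀ p, A h p ∈ Set.Icc (0:ℝ) 1) ∧ ∀ p, A none p = 1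

/-- The interest function `𝓘(M)` of a matching `M`. -/
def interestOf (η : Measure (Student H)) (M : MatchingFun H) : InterestFun H :=
  fun h p => ∫ θ, (if p ≤ θ.2 h then (1:ℝ) else 0) *
    (1 - ∑ h' ∈ Finset.univ.filter (fun h' : Option H => Prefers θ h' (some h)), M θ h') ∂η

/-- The admissions function `𝓐(I)` of an interest function `I`, given a vacancy function `V`
and capacities `C`. -/
def admissionsOf (V : ℝ → ℕ → ℝ) (C : H → ℕ) (I : InterestFun H) : AdmissionsFun H :=
  fun h p => h.elim 1 fun h0 => V (I h0 p) (C h0)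

/-- The matching `𝓜(A)` of an admissions function `A`. -/
def matchingOf (A : AdmissionsFun H) : MatchingFun H := fun θ h =>
  A h (priOf θ h) *
    ∏ h' ∈ Finset.univ.filter (fun h' : Option H => Prefers θ h' h), (1 - A h' (priOf θ h'))

/-- A matching `M` is `(η, V)`-stable if `M = 𝓜(𝓐(𝓘(M)))`. -/
def StableMatching (η : Measure (Student H)) (V : ℝ → ℕ → ℝ) (C : H → ℕ)
    (M : MatchingFun H) : Prop :=
  IsMatchingFun M ∧ M = matchingOf (admissionsOf V C (interestOf η M))

/-- An interest function `I` is `(η, V)`-stable if `I = 𝓘(𝓜(𝓐(I)))`. -/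
def StableInterest (η : Measure (Student H)) (V : ℝ → ℕ → ℝ) (C : H → ℕ)
    (I : InterestFun H) : Prop :=
  IsInterestFun I ∧ I = interestOf η (matchingOf (admissionsOf V C I))

/-- An admissions function `A` is `(η, V)`-stable if `A = 𝓐(𝓘(𝓜(A)))`. -/
def StableAdmissions (η : Measure (Student H)) (V : ℝ → ℕ → ℝ) (C : H → ℕ)
    (A : AdmissionsFun H) : Prop :=
  IsAdmissionsFun A ∧ A = admissionsOf V C (interestOf η (matchingOf A))

/-- An outcome `(M, I, A)` is `(η, V)`-stable. -/
def StableOutcome (η : Measure (Student H)) (V : ℝ → ℕ → ℝ) (C : H → ℕ)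
    (M : MatchingFun H) (I : InterestFun H) (A : AdmissionsFun H) : Prop :=
  IsMatchingFun M ∧ IsInterestFun I ∧ IsAdmissionsFun A ∧
  M = matchingOf A ∧ I = interestOf η M ∧ A = admissionsOf V C I

/-- The deterministic vacancy function `V^det(λ, C) = 1(λ < C)`. -/
def Vdet : ℝ → ℕ → ℝ := fun lam C => if lam < (C : ℝ) then 1 else 0

/-- The Poisson vacancy function `V^pois(λ, C) = Σ_{k<C} e^{-λ} λ^k / k!`. -/
def Vpois : ℝ → ℕ → ℝ := fun lam C =>
  ∑ k ∈ Finset.range C, Real.exp (-lam) * lam ^ k / (Nat.factorial k : ℝ)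

/-- A measure `η` on student types has strict priorities. -/
def StrictPriorities (η : Measure (Student H)) : Prop :=
  ∀ (h : H) (p : unitInterval), η {θ : Student H | Prefers θ (some h) none ∧ θ.2 h = p} = 0

end Defs

instance : Fact ((0:ℝ) ≤ 1) := ⟨zero_le_one⟩

section Cutoffs
variable {H : Type*} [Fintype H]

/-- The interest function `I^P` associated with a cutoff vector `P`: a student contributes to
`I^P_h(p)` if her priority at `h` exceeds `p` and she does not clear the cutoff at any option she
prefers to `h` (the outside option always admits, so a student preferring `∅` to `h` never
contributes). -/
def interestP (η : Measure (Student H)) (P : H → unitInterval) : InterestFun H :=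
  fun h p => ∫ θ, (if p < θ.2 h then (1:ℝ) else 0) *
    ∏ h' ∈ Finset.univ.filter (fun h' : Option H => Prefers θ h' (some h)),
      (h'.elim 0 fun h0 => if θ.2 h0 ≤ P h0 then (1:ℝ) else 0) ∂η

/-- Demand `D_h(P)` for school `h` at cutoffs `P`. -/
def demand (η : Measure (Student H)) (P : H → unitInterval) (h : H) : ℝ :=
  interestP η P h (P h)

/-- A cutoff vector `P` is `η`-market-clearing. -/
def MarketClearing (η : Measure (Student H)) (C : H → ℕ) (P : H → unitInterval) : Prop :=
  ∀ h : H, demand η P h ≤ (C h : ℝ) ∧ (0 < P h → demand η P h = (C h : ℝ))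

/-- The cutoff vector `𝓟(I)` associated with an interest function `I`:
`𝓟_h(I) = inf {p : I_h(p) < C_h}` (in the complete lattice `[0,1]`). -/
def cutoffOf (C : H → ℕ) (I : InterestFun H) (h : H) : unitInterval :=
  sInf {p : unitInterval | I h p < (C h : ℝ)}

end Cutoffs

/-!
Under `V^det` school `h` admits exactly the students whose priority lies above the cutoff
`P_h = 𝓟_h(I)`, except possibly on the tie `p_h = P_h`, which strict priorities make `η`-null.
Telescoping `1 - Σ_{h' ≻ h} M_{h'}` into a product of rejection probabilities then turns
stability into `I = I^P`. Strict priorities also make each `I^P_h` continuous (dominated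
convergence), so `I_h(P_h)` is a limit of values `< C_h` from the right and, when `P_h > 0`,
of values `≥ C_h` from the left.
-/

section SInfSetOfLt
variable {α β : Type*} [CompleteLinearOrder α] [LinearOrder β] {f : α → β} {c : β}

theorem Antitone.le_apply_iff_le_sInf_setOf_lt (hf : Antitone f) {q : α}
    (hq : q ≠ sInf {p | f p < c}) : c ≤ f q ↔ q ≤ sInf {p | f p < c} := by
  constructor
  · intro hcq
    by_contra! hlt
    obtain ⟨r, hr, hrq⟩ := sInf_lt_iff.mp hlt
    exact (hf hrq.le).trans_lt hr |>.not_ge hcq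
  · intro hle
    by_contra! hlt
    exact (hle.lt_of_ne hq).not_ge (sInf_le hlt)

variable [TopologicalSpace α] [OrderTopology α] [TopologicalSpace β] [OrderClosedTopology β]

theorem Continuous.apply_sInf_setOf_lt_le (hf : Continuous f) (htop : f ⊤ ≤ c) :
    f (sInf {p | f p < c}) ≤ c := by
  rcases Set.eq_empty_or_nonempty {p | f p < c} with hS | hS
  · rwa [hS, sInf_empty]
  · exact closure_lt_subset_le hf continuous_const (sInf_mem_closure hS)

theorem Continuous.le_apply_sInf_setOf_lt [DenselyOrdered α] (hf : Continuous f)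
    (hbot : ⊥ < sInf {p | f p < c}) : c ≤ f (sInf {p | f p < c}) := by
  have hsub : Set.Iio (sInf {p | f p < c}) ⊆ {p | c ≤ f p} :=
    fun q hq => not_lt.mp fun hlt => (sInf_le (α := α) hlt).not_gt hq
  have hmem : sInf {p | f p < c} ∈ closure (Set.Iio (sInf {p | f p < c})) := by
    rw [closure_Iio' ⟨⊥, hbot⟩]; exact Set.mem_Iic.mpr le_rfl
  exact closure_minimal hsub (isClosed_le continuous_const hf) hmem

end SInfSetOfLt

theorem continuousAt_ite_lt {α β : Type*} [LinearOrder α] [TopologicalSpace α]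
    [OrderTopology α] [TopologicalSpace β] {x p : α} (hp : p ≠ x) (a b : β) :
    ContinuousAt (fun q => if q < x then a else b) p := by
  rcases hp.lt_or_gt with hlt | hgt
  · exact continuousAt_const.congr ((eventually_lt_nhds hlt).mono fun q hq => (if_pos hq).symm)
  · exact continuousAt_const.congr
      ((eventually_gt_nhds hgt).mono fun q hq => (if_neg hq.le.not_gt).symm)

section Students
variable {H : Type*}

theorem Prefers.trans {θ : Student H} {a b c : Option H} (hab : Prefers θ a b)
    (hbc : Prefers θ b c) : Prefers θ a c :=
  letI := θ.1
  lt_trans hbc hab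

theorem prefers_none_of_not_prefers {θ : Student H} {h : H} (hh : ¬Prefers θ (some h) none) :
    Prefers θ none (some h) :=
  letI := θ.1
  lt_of_le_of_ne (not_lt.mp hh) (Option.some_ne_none h)

theorem StrictPriorities.ae_ne {η : Measure (Student H)} (hη : StrictPriorities η) (h : H)
    (p : unitInterval) : ∀ᵐ θ ∂η, Prefers θ (some h) none → θ.2 h ≠ p := by
  refine measure_mono_null (fun θ hθ => ?_) (hη h p)
  simpa using hθ

variable [Fintype H]

theorem prod_filter_prefers_eq_zero {θ : Student H} {h : H} (hh : ¬Prefers θ (some h) none)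
    {f : Option H → ℝ} (hf : f none = 0) :
    ∏ h' ∈ Finset.univ.filter (fun h' => Prefers θ h' (some h)), f h' = 0 :=
  Finset.prod_eq_zero
    (Finset.mem_filter.mpr ⟨Finset.mem_univ _, prefers_none_of_not_prefers hh⟩) hf

theorem one_sub_sum_filter_prefers (θ : Student H) (h : Option H) (f : Option H → ℝ) :
    1 - ∑ h' ∈ Finset.univ.filter (fun h' => Prefers θ h' h),
        f h' * ∏ h'' ∈ Finset.univ.filter (fun h'' => Prefers θ h'' h'), (1 - f h'') =
      ∏ h' ∈ Finset.univ.filter (fun h' => Prefers θ h' h), (1 - f h') := by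
  -- `prod_one_sub_ordered` telescopes over smaller indices; preferred options are the larger
  -- ones in `θ.1`, so we apply it in the dual order.
  let _ := θ.1
  refine Eq.trans ?_ (Finset.prod_one_sub_ordered (ι := (Option H)ᵒᵈ)
    (Finset.univ.filter (fun h' => Prefers θ h' h)) f).symm
  congr 1
  refine Finset.sum_congr rfl fun h' hh' => congrArg _ (Finset.prod_congr ?_ fun _ _ => rfl)
  ext h''
  simp only [Finset.mem_filter, Finset.mem_univ, true_and]
  refine ⟨fun hpref => Finset.mem_filter.mpr ⟨?_, hpref⟩, fun hmem =>
    (Finset.mem_filter.mp hmem).2⟩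
  exact Finset.mem_filter.mpr ⟨Finset.mem_univ _, hpref.trans (Finset.mem_filter.mp hh').2⟩

end Students

section Cutoffs
variable {H : Type*} [Fintype H]

def rejectedAbove (P : H → unitInterval) (θ : Student H) (h : H) : ℝ :=
  ∏ h' ∈ Finset.univ.filter (fun h' => Prefers θ h' (some h)),
    h'.elim 0 fun h0 => if θ.2 h0 ≤ P h0 then 1 else 0

theorem rejectedAbove_mem_Icc (P : H → unitInterval) (θ : Student H) (h : H) :
    rejectedAbove P θ h ∈ Set.Icc (0 : ℝ) 1 := by
  have hfactor : ∀ h' : Option H,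
      (h'.elim 0 fun h0 => if θ.2 h0 ≤ P h0 then 1 else 0 : ℝ) ∈ Set.Icc (0 : ℝ) 1 := by
    rintro (_ | h0)
    · simp
    · by_cases hle : θ.2 h0 ≤ P h0 <;> simp [hle]
  exact ⟨Finset.prod_nonneg fun h' _ => (hfactor h').1,
    Finset.prod_le_one (fun h' _ => (hfactor h').1) fun h' _ => (hfactor h').2⟩

theorem rejectedAbove_eq_zero {P : H → unitInterval} {θ : Student H} {h : H}
    (hh : ¬Prefers θ (some h) none) : rejectedAbove P θ h = 0 :=
  prod_filter_prefers_eq_zero hh rfl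

theorem measurable_rejectedAbove (P : H → unitInterval) (h : H) :
    Measurable fun θ : Student H => rejectedAbove P θ h := by
  unfold rejectedAbove
  simp_rw [Finset.prod_filter]
  refine Finset.measurable_prod _ fun h' _ => Measurable.ite ?_ ?_ measurable_const
  · exact show MeasurableSet (Prod.fst ⁻¹' {L : LinearOrder (Option H) | L.lt (some h) h'}) from
      measurable_fst MeasurableSpace.measurableSet_top
  · cases h' with
    | none => exact measurable_const
    | some h0 =>
      exact Measurable.ite (measurableSet_le ((measurable_pi_apply h0).comp measurable_snd)
        measurable_const) measurable_const measurable_const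

variable {η : Measure (Student H)}

theorem interestP_eq_integral (P : H → unitInterval) (h : H) :
    interestP η P h = fun p =>
      ∫ θ, (if p < θ.2 h then 1 else 0) * rejectedAbove P θ h ∂η :=
  rfl

theorem interestP_top (P : H → unitInterval) (h : H) : interestP η P h ⊤ = 0 := by
  simp [interestP, not_top_lt]

theorem integral_le_mul_rejectedAbove (hη : StrictPriorities η) (P : H → unitInterval) (h : H)
    (p : unitInterval) :
    ∫ θ, (if p ≤ θ.2 h then 1 else 0) * rejectedAbove P θ h ∂η = interestP η P h p := by
  rw [interestP_eq_integral]
  refine integral_congr_ae ((hη.ae_ne h p).mono fun θ hθ => ?_)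
  by_cases hpref : Prefers θ (some h) none
  · simp only [(hθ hpref).symm.le_iff_lt]
  · simp only [rejectedAbove_eq_zero hpref, mul_zero]

theorem continuous_interestP [IsFiniteMeasure η] (hη : StrictPriorities η)
    (P : H → unitInterval) (h : H) : Continuous (interestP η P h) := by
  have hθh : Measurable fun θ : Student H => θ.2 h := (measurable_pi_apply h).comp measurable_snd
  rw [interestP_eq_integral, continuous_iff_continuousAt]
  refine fun p =>
    continuousAt_of_dominated (bound := fun _ => 1) ?_ ?_ (integrable_const 1) ?_
  · have hind (q : unitInterval) :
        Measurable fun θ : Student H => if q < θ.2 h then (1 : ℝ) else 0 :=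
      Measurable.ite (measurableSet_lt measurable_const hθh) measurable_const measurable_const
    exact Eventually.of_forall fun q =>
      ((hind q).mul (measurable_rejectedAbove P h)).aestronglyMeasurable
  · refine Eventually.of_forall fun q => Eventually.of_forall fun θ => ?_
    have := rejectedAbove_mem_Icc P θ h
    rw [Real.norm_eq_abs, abs_le]
    split_ifs <;> constructor <;> linarith [this.1, this.2]
  · filter_upwards [hη.ae_ne h p] with θ hθ
    by_cases hpref : Prefers θ (some h) none
    · exact (continuousAt_ite_lt (hθ hpref).symm 1 0).mul continuousAt_const
    · simp only [rejectedAbove_eq_zero hpref, mul_zero]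
      exact continuousAt_const

end Cutoffs

section Stability
variable {H : Type*}

theorem one_sub_admissionsOf_Vdet {C : H → ℕ} {I : InterestFun H} {h : H} (hI : Antitone (I h))
    {q : unitInterval} (hq : q ≠ cutoffOf C I h) :
    1 - admissionsOf Vdet C I (some h) q = if q ≤ cutoffOf C I h then 1 else 0 := by
  rw [cutoffOf] at hq ⊢
  simp only [← hI.le_apply_iff_le_sInf_setOf_lt hq]
  by_cases hlt : I h q < C h <;> simp [admissionsOf, Vdet, hlt]

variable [Fintype H]

theorem interestOf_matchingOf (η : Measure (Student H)) (A : AdmissionsFun H) (h : H)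
    (p : unitInterval) :
    interestOf η (matchingOf A) h p = ∫ θ, (if p ≤ θ.2 h then 1 else 0) *
      ∏ h' ∈ Finset.univ.filter (fun h' => Prefers θ h' (some h)),
        (1 - A h' (priOf θ h')) ∂η :=
  integral_congr_ae (Eventually.of_forall fun θ =>
    congrArg _ (one_sub_sum_filter_prefers θ (some h) fun h' => A h' (priOf θ h')))

theorem prod_one_sub_admissionsOf_Vdet {C : H → ℕ} {I : InterestFun H}
    (hI : ∀ h, Antitone (I h)) {θ : Student H}
    (hθ : ∀ h, Prefers θ (some h) none → θ.2 h ≠ cutoffOf C I h) (h : H) :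
    ∏ h' ∈ Finset.univ.filter (fun h' => Prefers θ h' (some h)),
        (1 - admissionsOf Vdet C I h' (priOf θ h')) =
      rejectedAbove (cutoffOf C I) θ h := by
  by_cases hpref : Prefers θ (some h) none
  · refine Finset.prod_congr rfl fun h' hh' => ?_
    cases h' with
    | none => simp [admissionsOf]
    | some h0 =>
      exact one_sub_admissionsOf_Vdet (hI h0) (hθ h0 ((Finset.mem_filter.mp hh').2.trans hpref))
  · rw [rejectedAbove_eq_zero hpref, prod_filter_prefers_eq_zero hpref (by simp [admissionsOf])]

theorem StableInterest.eq_interestP_cutoffOf {η : Measure (Student H)} {C : H → ℕ}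
    {I : InterestFun H} (hI : StableInterest η Vdet C I) (hη : StrictPriorities η) :
    I = interestP η (cutoffOf C I) := by
  funext h p
  have hties : ∀ᵐ θ ∂η, ∀ h0, Prefers θ (some h0) none → θ.2 h0 ≠ cutoffOf C I h0 :=
    ae_all_iff.mpr fun h0 => hη.ae_ne h0 _
  rw [← integral_le_mul_rejectedAbove hη, congrFun (congrFun hI.2 h) p, interestOf_matchingOf]
  exact integral_congr_ae (hties.mono fun θ hθ =>
    congrArg _ (prod_one_sub_admissionsOf_Vdet (fun h0 => (hI.1 h0).1) hθ h))

end Stability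

/-- If `η` is a positive finite measure with strict priorities and the interest
function `I` is `(η, V^det)`-stable, then the cutoff vector `𝓟(I)` is `η`-market-clearing and
`I = I^{𝓟(I)}`. -/
theorem stmt3 {H : Type*} [Fintype H] (C : H → ℕ) (η : Measure (Student H))
    [IsFiniteMeasure η] (hη : StrictPriorities η) (I : InterestFun H)
    (hI : StableInterest η Vdet C I) :
    MarketClearing η C (cutoffOf C I) ∧ I = interestP η (cutoffOf C I) := by
  have hIP := hI.eq_interestP_cutoffOf hη
  refine ⟨fun h => ?_, hIP⟩
  have hcont : Continuous (I h) := by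
    rw [hIP]
    exact continuous_interestP hη _ h
  have htop : I h ⊤ ≤ C h := by
    rw [hIP, interestP_top]
    positivity
  have hdemand : demand η (cutoffOf C I) h = I h (cutoffOf C I h) := by
    rw [demand, ← hIP]
  rw [hdemand]
  exact ⟨hcont.apply_sInf_setOf_lt_le htop, fun hpos =>
    (hcont.apply_sInf_setOf_lt_le htop).antisymm (hcont.le_apply_sInf_setOf_lt hpos)⟩
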